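/- arXiv:1611.08727 — 3 statements merged into one kernel-verified Lean document; each statement's English description precedes it below -/
import Mathlib

section
/- For any n×n real matrix A and any unit vector v in R^n, one has |−vᵀAv + tr(A)| ≤ √(n−1) · ‖A‖, where ‖A‖ denotes the Frobenius (Euclidean) norm of A. -/
/-- For any n×n real matrix `A` and any unit vector `v ∈ ℝⁿ`,
`|−vᵀAv + tr A| ≤ √(n−1) · ‖A‖_F`, where `‖A‖_F` is the Frobenius norm. -/
theorem frobenius_trace_estimate (n : ℕ) (A : Matrix (Fin n) (Fin n) ℝ)
    (v : Fin n → ℝ) (hv : Real.sqrt (∑ i, (v i) ^ 2) = 1) :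
    |-(∑ i, ∑ j, v i * A i j * v j) + A.trace| ≤
      Real.sqrt ((n : ℝ) - 1) * Real.sqrt (∑ i, ∑ j, (A i j) ^ 2) := by
  have hs : (∑ i, (v i) ^ 2) = 1 := by
    have h := Real.sqrt_eq_one.mp hv
    exact h
  set B : Fin n → Fin n → ℝ := fun i j => (if i = j then (1:ℝ) else 0) - v i * v j with hBdef
  have key : -(∑ i, ∑ j, v i * A i j * v j) + A.trace = ∑ i, ∑ j, A i j * B i j := by
    have h1 : ∀ i, ∑ j, A i j * B i j = A i i - ∑ j, v i * A i j * v j := by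
      intro i
      simp only [hBdef, mul_sub, Finset.sum_sub_distrib, mul_ite, mul_one, mul_zero,
        Finset.sum_ite_eq' Finset.univ i (fun j => A i j), Finset.mem_univ, if_true]
      ring_nf
      congr 1
      · simp
      · apply Finset.sum_congr rfl
        intro j _
        ring
    simp only [h1, Finset.sum_sub_distrib, Matrix.trace, Matrix.diag]
    ring
  rw [key]
  have hBsum : ∑ i, ∑ j, B i j ^ 2 = (n : ℝ) - 1 := by
    have h2 : ∀ i, ∑ j, B i j ^ 2 = (if i = i then (1:ℝ) else 0) - 2 * v i ^ 2 + v i ^ 2 := by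
      intro i
      have : ∀ j, B i j ^ 2 = (if i = j then (1:ℝ) else 0) - 2 * ((if i = j then (1:ℝ) else 0) * (v i * v j)) + v i ^ 2 * v j ^ 2 := by
        intro j
        by_cases h : i = j <;> simp [hBdef, h] <;> ring
      simp only [this, Finset.sum_add_distrib, Finset.sum_sub_distrib, ← Finset.mul_sum,
        Finset.sum_ite_eq Finset.univ i, Finset.mem_univ, if_true, ite_mul, zero_mul, hs, mul_one]
      ring
    simp only [h2, if_true, Finset.sum_add_distrib, Finset.sum_sub_distrib, ← Finset.mul_sum,
      hs, Finset.sum_const, Finset.card_univ, Fintype.card_fin, nsmul_eq_mul, mul_one]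
    ring
  -- Cauchy-Schwarz over product type
  have cs : (∑ p : Fin n × Fin n, A p.1 p.2 * B p.1 p.2) ^ 2 ≤
      (∑ p : Fin n × Fin n, A p.1 p.2 ^ 2) * (∑ p : Fin n × Fin n, B p.1 p.2 ^ 2) :=
    Finset.sum_mul_sq_le_sq_mul_sq _ _ _
  have e1 : (∑ i, ∑ j, A i j * B i j) = ∑ p : Fin n × Fin n, A p.1 p.2 * B p.1 p.2 :=
    by rw [Fintype.sum_prod_type]
  have e2 : (∑ i, ∑ j, A i j ^ 2) = ∑ p : Fin n × Fin n, A p.1 p.2 ^ 2 :=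
    by rw [Fintype.sum_prod_type]
  have e3 : (∑ i, ∑ j, B i j ^ 2) = ∑ p : Fin n × Fin n, B p.1 p.2 ^ 2 :=
    by rw [Fintype.sum_prod_type]
  rw [e1, e2]
  rw [e3] at hBsum
  have habs : |∑ p : Fin n × Fin n, A p.1 p.2 * B p.1 p.2| ≤
      Real.sqrt ((∑ p : Fin n × Fin n, A p.1 p.2 ^ 2) * (∑ p : Fin n × Fin n, B p.1 p.2 ^ 2)) := by
    rw [← Real.sqrt_sq_eq_abs]
    exact Real.sqrt_le_sqrt cs
  calc |∑ p : Fin n × Fin n, A p.1 p.2 * B p.1 p.2|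
      ≤ Real.sqrt ((∑ p : Fin n × Fin n, A p.1 p.2 ^ 2) * (∑ p : Fin n × Fin n, B p.1 p.2 ^ 2)) := habs
    _ = Real.sqrt ((n : ℝ) - 1) * Real.sqrt (∑ p : Fin n × Fin n, A p.1 p.2 ^ 2) := by
        rw [hBsum, Real.sqrt_mul (by positivity), mul_comm]
end

section
/- Let Ω ⊆ R be a bounded open interval (a,b), p ≥ 2, h : (0,B) → (0,∞) continuous with primitive H(λ)=∫₀^λ h and T_h = H/h. If u ∈ C²([a,b]) with 0 < u < B on [a,b] and u'(a)=u'(b)=0, then ∫_a^b |u'(x)|^p h(u(x)) dx ≤ (p−1)^{p/2} ∫_a^b (|u''(x)| |T_h(u(x))|)^{p/2} h(u(x)) dx. -/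
open Set MeasureTheory intervalIntegral
open scoped ENNReal

section Aux
open Real


lemma abs_rpow_cont (q : ℝ) (hq : 0 ≤ q) : Continuous (fun t : ℝ => |t| ^ q) :=
  (Real.continuous_rpow_const hq).comp continuous_abs

lemma g_hasDeriv (p : ℝ) (hp : 2 ≤ p) (t : ℝ) :
    HasDerivAt (fun s : ℝ => |s| ^ (p - 2) * s) ((p - 1) * |t| ^ (p - 2)) t := by
  rcases eq_or_lt_of_le hp with hp2 | hp2
  · subst hp2
    simp only [sub_self, Real.rpow_zero, one_mul]
    have := hasDerivAt_id t
    norm_num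
    exact this
  · have hq : (0:ℝ) < p - 2 := by linarith
    rcases lt_trichotomy t 0 with ht | ht | ht
    · -- t < 0
      have hnt : (0:ℝ) < -t := by linarith
      have h1 : HasDerivAt (fun s : ℝ => (-s) ^ (p - 2)) (-((p - 2) * (-t) ^ (p - 2 - 1))) t := by
        have := (Real.hasDerivAt_rpow_const (p := p - 2) (x := -t) (Or.inl hnt.ne')).comp t
          ((hasDerivAt_id t).neg)
        simpa [Function.comp_def] using this
      have key := h1.mul (hasDerivAt_id t)
      simp only [id_eq, mul_one] at key
      have h3 : (-t) ^ (p - 2) = (-t) ^ (p - 2 - 1) * (-t) := by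
        rw [← Real.rpow_add_one hnt.ne']
        congr 1; ring
      have hval : -((p - 2) * (-t) ^ (p - 2 - 1)) * t + (-t) ^ (p - 2)
          = (p - 1) * (-t) ^ (p - 2) := by
        rw [h3]; ring
      rw [hval] at key
      rw [abs_of_neg ht]
      refine key.congr_of_eventuallyEq ?_
      filter_upwards [eventually_lt_nhds ht] with s hs
      rw [abs_of_neg hs]; rfl
    · -- t = 0
      subst ht
      rw [abs_zero, Real.zero_rpow hq.ne', mul_zero]
      rw [hasDerivAt_iff_tendsto_slope]
      have heq : ∀ s : ℝ, s ≠ 0 →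
          slope (fun s : ℝ => |s| ^ (p - 2) * s) 0 s = |s| ^ (p - 2) := by
        intro s hs
        rw [slope_def_field]
        field_simp
        simp
      have habs : Filter.Tendsto (fun s : ℝ => |s| ^ (p - 2)) (nhdsWithin 0 {(0:ℝ)}ᶜ)
          (nhds 0) := by
        have := ((abs_rpow_cont (p-2) hq.le).tendsto 0).mono_left
          (nhdsWithin_le_nhds (s := {(0:ℝ)}ᶜ))
        simpa [Real.zero_rpow hq.ne'] using this
      refine habs.congr' ?_
      filter_upwards [self_mem_nhdsWithin] with s hs
      exact (heq s hs).symm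
    · -- t > 0
      have h1 : HasDerivAt (fun s : ℝ => s ^ (p - 2)) ((p - 2) * t ^ (p - 2 - 1)) t :=
        Real.hasDerivAt_rpow_const (Or.inl ht.ne')
      have key := h1.mul (hasDerivAt_id t)
      simp only [id_eq, mul_one] at key
      have h3 : t ^ (p - 2) = t ^ (p - 2 - 1) * t := by
        rw [← Real.rpow_add_one ht.ne']
        congr 1; ring
      have hval : (p - 2) * t ^ (p - 2 - 1) * t + t ^ (p - 2)
          = (p - 1) * t ^ (p - 2) := by
        rw [h3]; ring
      rw [hval] at key
      rw [abs_of_pos ht]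
      refine key.congr_of_eventuallyEq ?_
      filter_upwards [eventually_gt_nhds ht] with s hs
      rw [abs_of_pos hs]; rfl

lemma young_aux (p : ℝ) (hp : 2 ≤ p) (t v : ℝ) (ht : 0 ≤ t) (hv : 0 ≤ v) :
    (p - 1) * (t ^ (p - 2) * v) ≤
      (p - 2) / p * t ^ p + 2 / p * ((p - 1) ^ (p / 2) * v ^ (p / 2)) := by
  rcases eq_or_lt_of_le hp with hp2 | hp2
  · subst hp2
    norm_num [Real.rpow_zero, Real.rpow_one]
  · have hq : (0:ℝ) < p - 2 := by linarith
    have hp0 : (0:ℝ) < p := by linarith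
    have hc : (0:ℝ) < p - 1 := by linarith
    have hconj : Real.HolderConjugate (p / (p - 2)) (p / 2) := by
      rw [Real.holderConjugate_iff]
      constructor
      · rw [lt_div_iff₀ hq]; linarith
      · rw [inv_div, inv_div, ← add_div, sub_add_cancel, div_self hp0.ne']
    have hyoung := Real.young_inequality_of_nonneg
      (a := t ^ (p - 2)) (b := (p - 1) * v)
      (Real.rpow_nonneg ht _) (by positivity) hconj
    have hA : (t ^ (p - 2)) ^ (p / (p - 2)) = t ^ p := by
      rw [← Real.rpow_mul ht]
      congr 1
      field_simp
    have hB : ((p - 1) * v) ^ (p / 2) = (p - 1) ^ (p / 2) * v ^ (p / 2) :=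
      Real.mul_rpow hc.le hv
    rw [hA, hB] at hyoung
    calc (p - 1) * (t ^ (p - 2) * v) = t ^ (p - 2) * ((p - 1) * v) := by ring
      _ ≤ t ^ p / (p / (p - 2)) + (p - 1) ^ (p / 2) * v ^ (p / 2) / (p / 2) := hyoung
      _ = (p - 2) / p * t ^ p + 2 / p * ((p - 1) ^ (p / 2) * v ^ (p / 2)) := by
          rw [div_div_eq_mul_div, div_div_eq_mul_div]
          ring

end Aux

/-- The one-dimensional weighted interpolation inequality: for `p ≥ 2`,
`h : (0,B) → (0,∞)` continuous and integrable near `0`, with primitive `H(λ) = ∫₀^λ h`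
and transform `T_h = H/h`, and `u ∈ C²([a,b])` with `0 < u < B` on `[a,b]` and
`u'(a) = u'(b) = 0`, one has
`∫_a^b |u'|^p h(u) ≤ (p−1)^{p/2} ∫_a^b (|u''| |T_h(u)|)^{p/2} h(u)`. -/
theorem one_dimensional_inequality (a b : ℝ) (hab : a < b) (p : ℝ) (hp : 2 ≤ p)
    (B : ℝ≥0∞) (hB : 0 < B) (h : ℝ → ℝ)
    (hcont : ContinuousOn h {x : ℝ | 0 < x ∧ ENNReal.ofReal x < B})
    (hpos : ∀ x : ℝ, 0 < x → ENNReal.ofReal x < B → 0 < h x)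
    (hint : ∀ lam : ℝ, 0 < lam → ENNReal.ofReal lam < B → IntegrableOn h (Ioo 0 lam))
    (u u' u'' : ℝ → ℝ)
    (hu' : ∀ x ∈ Icc a b, HasDerivWithinAt u (u' x) (Icc a b) x)
    (hu'' : ∀ x ∈ Icc a b, HasDerivWithinAt u' (u'' x) (Icc a b) x)
    (hu''cont : ContinuousOn u'' (Icc a b))
    (hrange : ∀ x ∈ Icc a b, 0 < u x ∧ ENNReal.ofReal (u x) < B)
    (hbca : u' a = 0) (hbcb : u' b = 0) :
    ∫ x in a..b, |u' x| ^ p * h (u x) ≤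
      (p - 1) ^ (p / 2) *
        ∫ x in a..b,
          (|u'' x| * |(∫ s in (0:ℝ)..(u x), h s) / h (u x)|) ^ (p / 2) * h (u x) := by
  have hp0 : (0:ℝ) < p := by linarith
  have hq0 : (0:ℝ) ≤ p - 2 := by linarith
  set S : Set ℝ := {x : ℝ | 0 < x ∧ ENNReal.ofReal x < B} with hS
  have hSopen : IsOpen S := by
    have : S = Ioi (0:ℝ) ∩ ENNReal.ofReal ⁻¹' (Iio B) := rfl
    rw [this]
    exact isOpen_Ioi.inter (isOpen_Iio.preimage ENNReal.continuous_ofReal)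
  have hmem : ∀ x ∈ Icc a b, u x ∈ S := fun x hx => hrange x hx
  set H : ℝ → ℝ := fun l => ∫ s in (0:ℝ)..l, h s with hHdef
  have hIcc : uIcc a b = Icc a b := uIcc_of_le hab.le
  -- continuity of u, u'
  have hu_cont : ContinuousOn u (Icc a b) := fun x hx => (hu' x hx).continuousWithinAt
  have hu'_cont : ContinuousOn u' (Icc a b) := fun x hx => (hu'' x hx).continuousWithinAt
  have hhu_cont : ContinuousOn (fun x => h (u x)) (Icc a b) := hcont.comp hu_cont hmem
  have hhu_pos : ∀ x ∈ Icc a b, 0 < h (u x) := fun x hx =>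
    hpos (u x) (hrange x hx).1 (hrange x hx).2
  -- FTC : derivative of H
  have hH_deriv : ∀ l ∈ S, HasDerivAt H (h l) l := by
    intro l hl
    apply intervalIntegral.integral_hasDerivAt_right
    · rw [intervalIntegrable_iff_integrableOn_Ioo_of_le hl.1.le]
      exact hint l hl.1 hl.2
    · exact (hcont.stronglyMeasurableAtFilter hSopen) l hl
    · exact hcont.continuousAt (hSopen.mem_nhds hl)
  have hHu_cont : ContinuousOn (fun x => H (u x)) (Icc a b) := fun x hx =>
    ((hH_deriv (u x) (hmem x hx)).continuousAt).comp_continuousWithinAt (hu_cont x hx)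
  -- notation for key functions
  set v : ℝ → ℝ := fun x => |u'' x| * |H (u x) / h (u x)| with hvdef
  have hv_nonneg : ∀ x, 0 ≤ v x := fun x => mul_nonneg (abs_nonneg _) (abs_nonneg _)
  set C : ℝ := (p - 1) ^ (p / 2) with hCdef
  have hC_nonneg : 0 ≤ C := Real.rpow_nonneg (by linarith) _
  -- continuity of v and powers
  have hv_cont : ContinuousOn v (Icc a b) := by
    apply hu''cont.abs.mul
    exact (hHu_cont.div hhu_cont (fun x hx => (hhu_pos x hx).ne')).abs
  have habs_p : Continuous (fun t : ℝ => |t| ^ p) := abs_rpow_cont p hp0.le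
  have habs_q : Continuous (fun t : ℝ => |t| ^ (p - 2)) := abs_rpow_cont _ hq0
  have hrpow_half : Continuous (fun t : ℝ => t ^ (p / 2)) :=
    Real.continuous_rpow_const (by positivity)
  -- integrable functions
  have hi1 : IntervalIntegrable (fun x => |u' x| ^ p * h (u x)) volume a b := by
    apply ContinuousOn.intervalIntegrable; rw [hIcc]
    exact (habs_p.comp_continuousOn hu'_cont).mul hhu_cont
  have hi2 : IntervalIntegrable
      (fun x => (p - 1) * |u' x| ^ (p - 2) * u'' x * H (u x)) volume a b := by
    apply ContinuousOn.intervalIntegrable; rw [hIcc]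
    exact (((continuousOn_const.mul (habs_q.comp_continuousOn hu'_cont)).mul
      hu''cont).mul hHu_cont)
  have hi3 : IntervalIntegrable
      (fun x => (p - 1) * (|u' x| ^ (p - 2) * v x) * h (u x)) volume a b := by
    apply ContinuousOn.intervalIntegrable; rw [hIcc]
    exact ((continuousOn_const.mul
      ((habs_q.comp_continuousOn hu'_cont).mul hv_cont)).mul hhu_cont)
  have hi5 : IntervalIntegrable (fun x => v x ^ (p / 2) * h (u x)) volume a b := by
    apply ContinuousOn.intervalIntegrable; rw [hIcc]
    exact (hrpow_half.comp_continuousOn hv_cont).mul hhu_cont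
  -- integration by parts
  set F : ℝ → ℝ := fun x => |u' x| ^ (p - 2) * u' x * H (u x) with hFdef
  set F' : ℝ → ℝ := fun x =>
    (p - 1) * |u' x| ^ (p - 2) * u'' x * H (u x) + |u' x| ^ p * h (u x) with hF'def
  have hptA : ∀ t w : ℝ, |t| ^ (p - 2) * t * (w * t) = |t| ^ p * w := by
    intro t w
    rcases eq_or_ne t 0 with rfl | ht
    · simp [Real.zero_rpow hp0.ne']
    · have h2 : |t| ^ p = |t| ^ (p - 2) * t ^ 2 := by
        rw [← sq_abs t, ← Real.rpow_natCast |t| 2, ← Real.rpow_add (abs_pos.mpr ht)]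
        norm_num
      rw [h2]; ring
  have hF : ∀ x ∈ Icc a b, HasDerivWithinAt F (F' x) (Icc a b) x := by
    intro x hx
    have d1 : HasDerivWithinAt (fun y => |u' y| ^ (p - 2) * u' y)
        ((p - 1) * |u' x| ^ (p - 2) * u'' x) (Icc a b) x := by
      have := (g_hasDeriv p hp (u' x)).comp_hasDerivWithinAt x (hu'' x hx)
      simpa [Function.comp_def, mul_assoc] using this
    have d2 : HasDerivWithinAt (fun y => H (u y)) (h (u x) * u' x) (Icc a b) x :=
      (hH_deriv (u x) (hmem x hx)).comp_hasDerivWithinAt x (hu' x hx)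
    have := d1.mul d2
    refine HasDerivWithinAt.congr_deriv this ?_
    simp only [hF'def]
    rw [← hptA (u' x) (h (u x))]
    try ring
  have hF'int : IntervalIntegrable F' volume a b := hi2.add hi1
  have hIBP : ∫ x in a..b, F' x = 0 := by
    have := intervalIntegral.integral_eq_sub_of_hasDeriv_right_of_le hab.le
      (fun x hx => (hF x hx).continuousWithinAt)
      (fun x hx => (((hF x (Ioo_subset_Icc_self hx)).hasDerivAt
        (Icc_mem_nhds hx.1 hx.2)).hasDerivWithinAt)) hF'int
    rw [this]
    simp [hFdef, hbca, hbcb]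
  -- split the integral
  have hsplit : (∫ x in a..b, |u' x| ^ p * h (u x)) =
      - ∫ x in a..b, (p - 1) * |u' x| ^ (p - 2) * u'' x * H (u x) := by
    have := intervalIntegral.integral_add hi2 hi1
    rw [hF'def] at hIBP
    rw [this] at hIBP
    linarith
  -- bound by absolute values, rewritten with v
  have hstep2 : (∫ x in a..b, |u' x| ^ p * h (u x)) ≤
      ∫ x in a..b, (p - 1) * (|u' x| ^ (p - 2) * v x) * h (u x) := by
    rw [hsplit, ← intervalIntegral.integral_neg]
    apply intervalIntegral.integral_mono_on hab.le hi2.neg hi3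
    intro x hx
    have hv_eq : v x * h (u x) = |u'' x| * |H (u x)| := by
      rw [hvdef]
      simp only
      rw [abs_div, abs_of_pos (hhu_pos x hx), mul_assoc,
        div_mul_cancel₀ _ (hhu_pos x hx).ne']
    have h1 : -((p - 1) * |u' x| ^ (p - 2) * u'' x * H (u x)) ≤
        (p - 1) * |u' x| ^ (p - 2) * (|u'' x| * |H (u x)|) := by
      have hA : 0 ≤ (p - 1) * |u' x| ^ (p - 2) :=
        mul_nonneg (by linarith) (Real.rpow_nonneg (abs_nonneg _) _)
      have h2 : -(u'' x * H (u x)) ≤ |u'' x| * |H (u x)| := by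
        rw [← abs_mul]
        exact neg_le_abs _
      calc -((p - 1) * |u' x| ^ (p - 2) * u'' x * H (u x))
          = (p - 1) * |u' x| ^ (p - 2) * (-(u'' x * H (u x))) := by ring
        _ ≤ (p - 1) * |u' x| ^ (p - 2) * (|u'' x| * |H (u x)|) :=
            mul_le_mul_of_nonneg_left h2 hA
    calc -((p - 1) * |u' x| ^ (p - 2) * u'' x * H (u x))
        ≤ (p - 1) * |u' x| ^ (p - 2) * (|u'' x| * |H (u x)|) := h1
      _ = (p - 1) * (|u' x| ^ (p - 2) * v x) * h (u x) := by
          rw [show (p - 1) * (|u' x| ^ (p - 2) * v x) * h (u x)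
              = (p - 1) * |u' x| ^ (p - 2) * (v x * h (u x)) by ring, hv_eq]
  -- Young's inequality pointwise, integrated
  have hstep3 : (∫ x in a..b, (p - 1) * (|u' x| ^ (p - 2) * v x) * h (u x)) ≤
      (p - 2) / p * (∫ x in a..b, |u' x| ^ p * h (u x)) +
        2 / p * (C * ∫ x in a..b, v x ^ (p / 2) * h (u x)) := by
    have hmono := intervalIntegral.integral_mono_on hab.le hi3
      (((hi1.const_mul ((p-2)/p)).add ((hi5.const_mul C).const_mul (2/p))))
      (fun x hx => ?_)
    · calc (∫ x in a..b, (p - 1) * (|u' x| ^ (p - 2) * v x) * h (u x))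
          ≤ ∫ x in a..b, ((p - 2) / p * (|u' x| ^ p * h (u x)) +
              2 / p * (C * (v x ^ (p / 2) * h (u x)))) := hmono
        _ = (p - 2) / p * (∫ x in a..b, |u' x| ^ p * h (u x)) +
              2 / p * (C * ∫ x in a..b, v x ^ (p / 2) * h (u x)) := by
            rw [intervalIntegral.integral_add (hi1.const_mul _)
              ((hi5.const_mul C).const_mul (2/p)),
              intervalIntegral.integral_const_mul, intervalIntegral.integral_const_mul,
              intervalIntegral.integral_const_mul]
    · have hy := young_aux p hp (|u' x|) (v x) (abs_nonneg _) (hv_nonneg x)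
      have hh0 : 0 ≤ h (u x) := (hhu_pos x hx).le
      calc (p - 1) * (|u' x| ^ (p - 2) * v x) * h (u x)
          ≤ ((p - 2) / p * |u' x| ^ p + 2 / p * (C * v x ^ (p / 2))) * h (u x) :=
            mul_le_mul_of_nonneg_right hy hh0
        _ = (p - 2) / p * (|u' x| ^ p * h (u x)) +
              2 / p * (C * (v x ^ (p / 2) * h (u x))) := by ring
  -- combine
  set I : ℝ := ∫ x in a..b, |u' x| ^ p * h (u x) with hIdef
  set J : ℝ := ∫ x in a..b, v x ^ (p / 2) * h (u x) with hJdef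
  have hkey : I ≤ (p - 2) / p * I + 2 / p * (C * J) := le_trans hstep2 hstep3
  have hfinal : I ≤ C * J := by
    have h' := mul_le_mul_of_nonneg_left hkey hp0.le
    rw [mul_add] at h'
    have e1 : p * ((p - 2) / p * I) = (p - 2) * I := by field_simp
    have e2 : p * (2 / p * (C * J)) = 2 * (C * J) := by field_simp
    rw [e1, e2] at h'
    nlinarith
  exact hfinal
end

section
/- Let n ≥ 2, Ω ⊂ R^n a bounded open set with C^∞ (or Lipschitz) boundary, p = 2, h : (0,B) → (0,∞) continuous with primitive H(λ)=∫₀^λ h and T_h = H/h. If u ∈ C²(Ω̄) with 0 < u < B on Ω̄ and ∇u · n = 0 on ∂Ω (n the outer normal), then ∫_Ω |∇u|² h(u) dx ≤ ∫_Ω |Δu| |T_h(u)| h(u) dx. -/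
open Set MeasureTheory
open scoped ENNReal RealInnerProductSpace

/-- The Laplacian `Δu = tr ∇²u` on `ℝⁿ`. -/
noncomputable def laplacian' {n : ℕ} (u : EuclideanSpace ℝ (Fin n) → ℝ)
    (x : EuclideanSpace ℝ (Fin n)) : ℝ :=
  ∑ i, fderiv ℝ (gradient u) x (EuclideanSpace.single i 1) i



/-- clamp to [0,1] -/
noncomputable def clamp01 (t : ℝ) : ℝ := max 0 (min 1 t)

lemma clamp01_mem (t : ℝ) : clamp01 t ∈ Icc (0:ℝ) 1 :=
  ⟨le_max_left _ _, max_le zero_le_one (min_le_left _ _)⟩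

lemma clamp01_of_nonpos {t : ℝ} (h : t ≤ 0) : clamp01 t = 0 := by
  simp [clamp01, min_eq_right (h.trans zero_le_one), max_eq_left h]

lemma clamp01_of_one_le {t : ℝ} (h : 1 ≤ t) : clamp01 t = 1 := by
  simp [clamp01, min_eq_left h]

lemma clamp01_of_mem {t : ℝ} (h0 : 0 ≤ t) (h1 : t ≤ 1) : clamp01 t = t := by
  simp [clamp01, min_eq_right h1, max_eq_right h0]

lemma continuous_clamp01 : Continuous clamp01 := by
  exact continuous_const.max (continuous_const.min continuous_id)

/-- cubic smoothstep -/
noncomputable def qstep (t : ℝ) : ℝ := (clamp01 t)^2 * (3 - 2 * clamp01 t)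

noncomputable def qstep' (t : ℝ) : ℝ := 6 * clamp01 t * (1 - clamp01 t)

lemma continuous_qstep' : Continuous qstep' := by
  exact (continuous_const.mul continuous_clamp01).mul (continuous_const.sub continuous_clamp01)

lemma qstep_of_nonpos {t : ℝ} (h : t ≤ 0) : qstep t = 0 := by simp [qstep, clamp01_of_nonpos h]
lemma qstep_of_one_le {t : ℝ} (h : 1 ≤ t) : qstep t = 1 := by simp [qstep, clamp01_of_one_le h]; ring
lemma qstep'_nonneg (t : ℝ) : 0 ≤ qstep' t := by
  have := clamp01_mem t
  unfold qstep'
  nlinarith [this.1, this.2]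
lemma qstep'_of_nonpos {t : ℝ} (h : t ≤ 0) : qstep' t = 0 := by simp [qstep', clamp01_of_nonpos h]
lemma qstep'_of_one_le {t : ℝ} (h : 1 ≤ t) : qstep' t = 0 := by simp [qstep', clamp01_of_one_le h]
lemma qstep_nonneg (t : ℝ) : 0 ≤ qstep t := by
  have := clamp01_mem t; unfold qstep; nlinarith [this.1, this.2]
lemma qstep_le_one (t : ℝ) : qstep t ≤ 1 := by
  have := clamp01_mem t; unfold qstep; nlinarith [this.1, this.2, sq_nonneg (1 - clamp01 t)]

lemma hasDerivAt_P (t : ℝ) : HasDerivAt (fun s : ℝ => s^2*(3 - 2*s)) (6*t*(1-t)) t := by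
  have h : HasDerivAt (fun s : ℝ => s^2*(3 - 2*s)) (2*t*(3-2*t) + t^2*(-2)) t := by
    exact ((hasDerivAt_pow 2 t).mul ((hasDerivAt_const t 3).sub
      ((hasDerivAt_id t).const_mul 2))).congr_deriv (by norm_num)
  convert h using 1; ring

lemma hasDerivAt_qstep (t : ℝ) : HasDerivAt qstep (qstep' t) t := by
  rcases lt_trichotomy t 0 with ht | rfl | ht
  · have : qstep =ᶠ[nhds t] (fun _ => 0) := by
      filter_upwards [Iio_mem_nhds ht] with s hs
      exact qstep_of_nonpos (le_of_lt hs)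
    rw [qstep'_of_nonpos ht.le]
    exact (hasDerivAt_const t 0).congr_of_eventuallyEq this
  · -- t = 0
    have h1 : HasDerivWithinAt qstep 0 (Iic 0) 0 := by
      have : HasDerivWithinAt (fun _ : ℝ => (0:ℝ)) 0 (Iic 0) 0 := (hasDerivAt_const _ _).hasDerivWithinAt
      exact this.congr (fun s hs => qstep_of_nonpos hs) (qstep_of_nonpos le_rfl)
    have h2 : HasDerivWithinAt qstep 0 (Ici 0) 0 := by
      have hP : HasDerivWithinAt (fun s : ℝ => s^2*(3 - 2*s)) 0 (Ici 0) 0 := by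
        simpa using (hasDerivAt_P 0).hasDerivWithinAt
      apply hP.congr_of_eventuallyEq ?_ (by simp [qstep, clamp01_of_nonpos le_rfl])
      have : Ico (0:ℝ) 1 ∈ nhdsWithin 0 (Ici 0) := by
        apply mem_nhdsWithin.2 ⟨Iio 1, isOpen_Iio, by norm_num, ?_⟩
        intro s hs; exact ⟨hs.2, hs.1⟩
      filter_upwards [this] with s hs
      simp [qstep, clamp01_of_mem hs.1 hs.2.le]
    have h3 := h1.union h2
    rw [Iic_union_Ici] at h3
    have h0 : qstep' 0 = 0 := by simp [qstep', clamp01_of_nonpos le_rfl]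
    rw [h0]
    exact hasDerivWithinAt_univ.1 h3
  rcases lt_trichotomy t 1 with ht1 | rfl | ht1
  · have : qstep =ᶠ[nhds t] (fun s => s^2*(3 - 2*s)) := by
      filter_upwards [Ioo_mem_nhds ht ht1] with s hs
      simp [qstep, clamp01_of_mem hs.1.le hs.2.le]
    have h := (hasDerivAt_P t).congr_of_eventuallyEq this
    have : qstep' t = 6*t*(1-t) := by simp [qstep', clamp01_of_mem ht.le ht1.le]
    rw [this]; exact h
  · -- t = 1
    have h1 : HasDerivWithinAt qstep 0 (Iic 1) 1 := by
      have hP : HasDerivWithinAt (fun s : ℝ => s^2*(3 - 2*s)) 0 (Iic 1) 1 := by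
        simpa using (hasDerivAt_P 1).hasDerivWithinAt
      apply hP.congr_of_eventuallyEq ?_ (by simp [qstep, clamp01_of_one_le le_rfl])
      have : Ioc (0:ℝ) 1 ∈ nhdsWithin 1 (Iic 1) := by
        apply mem_nhdsWithin.2 ⟨Ioi 0, isOpen_Ioi, by norm_num, ?_⟩
        intro s hs; exact ⟨hs.1, hs.2⟩
      filter_upwards [this] with s hs
      simp [qstep, clamp01_of_mem hs.1.le hs.2]
    have h2 : HasDerivWithinAt qstep 0 (Ici 1) 1 := by
      have : HasDerivWithinAt (fun _ : ℝ => (1:ℝ)) 0 (Ici 1) 1 := (hasDerivAt_const _ _).hasDerivWithinAt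
      exact this.congr (fun s hs => qstep_of_one_le hs) (qstep_of_one_le le_rfl)
    have h3 := h1.union h2
    rw [Iic_union_Ici] at h3
    have h0 : qstep' 1 = 0 := by simp [qstep', clamp01_of_one_le le_rfl]
    rw [h0]
    exact hasDerivWithinAt_univ.1 h3
  · have : qstep =ᶠ[nhds t] (fun _ => 1) := by
      filter_upwards [Ioi_mem_nhds ht1] with s hs
      exact qstep_of_one_le (le_of_lt hs)
    rw [qstep'_of_one_le ht1.le]
    exact (hasDerivAt_const t 1).congr_of_eventuallyEq this

lemma continuous_qstep : Continuous qstep := by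
  unfold qstep
  exact (continuous_clamp01.pow 2).mul (continuous_const.sub (continuous_const.mul continuous_clamp01))

lemma compact_aux {X : Type*} [TopologicalSpace X] {Ω : Set X} {Φ : X → ℝ}
    (hΦc : Continuous Φ) (hΩdef : Ω = {x | Φ x < 0}) (hfront : frontier Ω = {x | Φ x = 0})
    (hK : IsCompact (closure Ω)) (P : Set X) (hP : IsClosed P)
    (hdisj : ∀ x ∈ frontier Ω, x ∉ P) :
    ∃ ε > 0, ∀ x ∈ closure Ω, -ε < Φ x → x ∉ P := by
  have hΦle : ∀ x ∈ closure Ω, Φ x ≤ 0 := by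
    intro x hx
    have : closure Ω ⊆ {x | Φ x ≤ 0} := by
      apply closure_minimal _ (isClosed_le hΦc continuous_const)
      rw [hΩdef]; intro y hy; simp only [mem_setOf_eq] at hy ⊢; linarith
    exact this hx
  have hΦneg : ∀ x ∈ closure Ω ∩ P, Φ x < 0 := by
    intro x ⟨hx1, hx2⟩
    rcases lt_or_eq_of_le (hΦle x hx1) with h | h
    · exact h
    · exact absurd hx2 (hdisj x (by rw [hfront]; exact h))
  rcases (closure Ω ∩ P).eq_empty_or_nonempty with he | hne
  · exact ⟨1, one_pos, fun x hx _ hxP => (eq_empty_iff_forall_notMem.1 he x) ⟨hx, hxP⟩⟩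
  · have hC : IsCompact (closure Ω ∩ P) := hK.inter_right hP
    obtain ⟨x₀, hx₀C, hx₀max⟩ := hC.exists_isMaxOn hne (hΦc.continuousOn)
    refine ⟨-Φ x₀, by linarith [hΦneg x₀ hx₀C], fun x hx hlt hxP => ?_⟩
    have h2 : Φ x ≤ Φ x₀ := hx₀max ⟨hx, hxP⟩
    simp only [neg_neg] at hlt
    linarith

lemma measure_aux {m : ℕ} {Ω : Set (EuclideanSpace ℝ (Fin m))} {Φ : EuclideanSpace ℝ (Fin m) → ℝ}
    (hΦc : Continuous Φ) (hΩopen : IsOpen Ω) (hΩbdd : Bornology.IsBounded Ω)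
    (hΩdef : Ω = {x | Φ x < 0}) {η : ℝ} (hη : 0 < η) :
    ∃ ε > 0, (volume (Ω ∩ {x | -ε < Φ x})).toReal < η := by
  set s : ℕ → Set (EuclideanSpace ℝ (Fin m)) := fun k => Ω ∩ {x | -(1/(k+1:ℝ)) < Φ x} with hs
  have hmeas : ∀ k, NullMeasurableSet (s k) volume :=
    fun k => ((hΩopen.inter (isOpen_lt continuous_const hΦc)).measurableSet).nullMeasurableSet
  have hanti : Antitone s := by
    intro k l hkl x hxm
    obtain ⟨hx1, hx2⟩ := hxm
    refine ⟨hx1, ?_⟩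
    simp only [mem_setOf_eq] at hx2 ⊢
    have hle : (1:ℝ)/(l+1) ≤ 1/(k+1) := by
      apply one_div_le_one_div_of_le (by positivity)
      exact add_le_add_left (Nat.cast_le.2 hkl) 1
    linarith
  have hfin : ∃ k, volume (s k) ≠ ⊤ :=
    ⟨0, ((hΩbdd.subset (inter_subset_left)).measure_lt_top).ne⟩
  have hempty : (⋂ k, s k) = ∅ := by
    rw [eq_empty_iff_forall_notMem]
    intro x hx
    have hx0 := mem_iInter.1 hx 0
    have hxΩ : x ∈ Ω := hx0.1
    have hΦx : Φ x < 0 := by rw [hΩdef] at hxΩ; exact hxΩ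
    obtain ⟨k, hk⟩ := exists_nat_gt (1 / (-Φ x))
    have hxk := (mem_iInter.1 hx k).2
    have h1 : 1 / (-Φ x) < k + 1 := by linarith
    have hpos : 0 < -Φ x := by linarith
    have h2 : 1 / ((k:ℝ)+1) < -Φ x := by
      rw [div_lt_iff₀ (by positivity)]
      rw [div_lt_iff₀ hpos] at h1
      nlinarith
    simp only [mem_setOf_eq] at hxk
    linarith
  have := MeasureTheory.tendsto_measure_iInter_atTop hmeas hanti hfin
  rw [hempty, measure_empty] at this
  have := ENNReal.tendsto_atTop_zero.1 this (ENNReal.ofReal (η/2)) (by simp [ENNReal.ofReal_pos]; linarith)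
  obtain ⟨k, hk⟩ := this
  refine ⟨1/(k+1:ℝ), by positivity, ?_⟩
  have hle := hk k le_rfl
  calc (volume (Ω ∩ {x | -(1/(k+1:ℝ)) < Φ x})).toReal ≤ (ENNReal.ofReal (η/2)).toReal := by
        apply ENNReal.toReal_mono (by simp) hle
  _ < η := by rw [ENNReal.toReal_ofReal (by linarith)]; linarith

lemma abs_coord_le_norm {m : ℕ} (x : EuclideanSpace ℝ (Fin m)) (i : Fin m) : |x i| ≤ ‖x‖ := by
  rw [EuclideanSpace.norm_eq]
  have h1 : ‖x i‖ ^ 2 ≤ ∑ j, ‖x j‖ ^ 2 :=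
    Finset.single_le_sum (f := fun j => ‖x j‖ ^ 2) (fun j _ => by positivity) (Finset.mem_univ i)
  calc |x i| = Real.sqrt (‖x i‖ ^ 2) := by rw [Real.sqrt_sq (norm_nonneg _)]; simp [Real.norm_eq_abs]
  _ ≤ Real.sqrt (∑ j, ‖x j‖ ^ 2) := Real.sqrt_le_sqrt h1

theorem div_integral_zero {n : ℕ}
    (G : EuclideanSpace ℝ (Fin (n+1)) → EuclideanSpace ℝ (Fin (n+1)))
    (G' : EuclideanSpace ℝ (Fin (n+1)) → EuclideanSpace ℝ (Fin (n+1)) →L[ℝ] EuclideanSpace ℝ (Fin (n+1)))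
    (hd : ∀ x, HasFDerivAt G (G' x) x)
    (hsupp : HasCompactSupport G)
    (hcont : Continuous fun x => ∑ i, G' x (EuclideanSpace.single i 1) i) :
    ∫ x, ∑ i, G' x (EuclideanSpace.single i 1) i = 0 := by
  classical
  set eL := EuclideanSpace.equiv (Fin (n+1)) ℝ with heL
  set D : EuclideanSpace ℝ (Fin (n+1)) → ℝ := fun x => ∑ i, G' x (EuclideanSpace.single i 1) i with hD
  have hG'zero : ∀ x, x ∉ tsupport G → G' x = 0 := by
    intro x hx
    have h0 : G =ᶠ[nhds x] (fun _ => 0) := by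
      have : (tsupport G)ᶜ ∈ nhds x := (hsupp.isCompact.isClosed.isOpen_compl).mem_nhds hx
      filter_upwards [this] with y hy
      exact image_eq_zero_of_notMem_tsupport hy
    exact (hd x).unique ((Filter.EventuallyEq.hasFDerivAt_iff h0).2 (hasFDerivAt_const _ _))
  obtain ⟨R, hR⟩ := hsupp.isCompact.isBounded.subset_ball 0
  set M := |R| + 1 with hM
  have hMpos : 0 < M := by positivity
  have hsub : tsupport G ⊆ Metric.ball 0 M :=
    hR.trans (Metric.ball_subset_ball (by simp [hM]; linarith [le_abs_self R]))
  have hout : ∀ x : EuclideanSpace ℝ (Fin (n+1)), M ≤ ‖x‖ → x ∉ tsupport G := by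
    intro x hx hmem
    have := hsub hmem
    simp [Metric.mem_ball, dist_zero_right] at this
    linarith
  set a : Fin (n+1) → ℝ := fun _ => -M with ha
  set b : Fin (n+1) → ℝ := fun _ => M with hb
  have hle : a ≤ b := fun i => by simp [ha, hb]; linarith
  set f : (Fin (n+1) → ℝ) → Fin (n+1) → ℝ := fun y => eL (G (eL.symm y)) with hf
  set f' : (Fin (n+1) → ℝ) → (Fin (n+1) → ℝ) →L[ℝ] Fin (n+1) → ℝ :=
    fun y => (eL : EuclideanSpace ℝ (Fin (n+1)) →L[ℝ] Fin (n+1) → ℝ).comp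
      ((G' (eL.symm y)).comp (eL.symm : (Fin (n+1) → ℝ) →L[ℝ] EuclideanSpace ℝ (Fin (n+1)))) with hf'
  have hGcont : Continuous G := by
    exact continuous_iff_continuousAt.2 fun x => (hd x).continuousAt
  have hfd : ∀ y, HasFDerivAt f (f' y) y := by
    intro y
    exact (eL.toContinuousLinearMap.hasFDerivAt).comp _
      ((hd (eL.symm y)).comp y eL.symm.toContinuousLinearMap.hasFDerivAt)
  have hdiv : ∀ y, (∑ i, f' y (Pi.single i 1) i) = D (eL.symm y) := by
    intro y
    rfl
  -- the divergence theorem on the box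
  have key := MeasureTheory.integral_divergence_of_hasFDerivAt_off_countable a b hle f f'
    ∅ Set.countable_empty
    (Continuous.continuousOn (eL.continuous.comp (hGcont.comp eL.symm.continuous)))
    (fun x hx => hfd x)
    (by
      have hc2 : Continuous fun y : Fin (n+1) → ℝ => D (eL.symm y) :=
        hcont.comp (ContinuousLinearEquiv.continuous _)
      have heq : (fun y : Fin (n+1) → ℝ => ∑ i, f' y (Pi.single i 1) i)
          = fun y => D (eL.symm y) := funext hdiv
      rw [IntegrableOn, heq]
      exact hc2.locallyIntegrable.integrableOn_isCompact isCompact_Icc)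
  -- all face integrals vanish
  have hface : ∀ (i : Fin (n+1)) (c : ℝ), |c| = M → ∀ x : Fin n → ℝ, f (i.insertNth c x) = 0 := by
    intro i c hc x
    have h1 : eL.symm (i.insertNth c x) ∉ tsupport G := by
      apply hout
      calc M = |c| := hc.symm
      _ = |(eL.symm (i.insertNth c x)) i| := by
            simp [eL]
      _ ≤ ‖eL.symm (i.insertNth c x)‖ := abs_coord_le_norm _ _
    simp [hf, image_eq_zero_of_notMem_tsupport h1]
  have hrhs : (∑ i : Fin (n + 1),
      ((∫ x in Icc (a ∘ i.succAbove) (b ∘ i.succAbove), f (i.insertNth (b i) x) i) -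
        ∫ x in Icc (a ∘ i.succAbove) (b ∘ i.succAbove), f (i.insertNth (a i) x) i)) = 0 := by
    apply Finset.sum_eq_zero
    intro i _
    have h1 : ∀ x : Fin n → ℝ, f (i.insertNth (b i) x) i = 0 := fun x => by
      rw [hface i (b i) (by simp [hb]; linarith) x]; rfl
    have h2 : ∀ x : Fin n → ℝ, f (i.insertNth (a i) x) i = 0 := fun x => by
      rw [hface i (a i) (by simp [ha]; linarith) x]; rfl
    simp [h1, h2]
  rw [hrhs] at key
  -- transfer
  have e1 : ∫ y : Fin (n+1) → ℝ, D (eL.symm y) = ∫ x, D x := by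
    have h := (EuclideanSpace.volume_preserving_symm_measurableEquiv_toLp (Fin (n+1))).symm
    have := h.integral_comp' (g := D)
    convert this using 2
    all_goals rfl
  have e2 : ∫ y in Icc a b, D (eL.symm y) = ∫ y : Fin (n+1) → ℝ, D (eL.symm y) := by
    apply setIntegral_eq_integral_of_forall_compl_eq_zero
    intro y hy
    have : ∃ i, M ≤ |y i| := by
      by_contra hcon
      push_neg at hcon
      apply hy
      rw [Set.mem_Icc]
      refine ⟨fun i => ?_, fun i => ?_⟩
      · have h2 := abs_lt.1 (hcon i); show -M ≤ y i; linarith [h2.1]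
      · have h2 := abs_lt.1 (hcon i); show y i ≤ M; linarith [h2.2]
    obtain ⟨i, hi⟩ := this
    have : eL.symm y ∉ tsupport G := by
      apply hout
      calc M ≤ |y i| := hi
      _ = |(eL.symm y) i| := by simp [eL]
      _ ≤ ‖eL.symm y‖ := abs_coord_le_norm _ _
    simp [hD, hG'zero _ this]
  calc ∫ x, D x = ∫ y : Fin (n+1) → ℝ, D (eL.symm y) := e1.symm
  _ = ∫ y in Icc a b, D (eL.symm y) := e2.symm
  _ = 0 := by rw [← key]; apply setIntegral_congr_fun measurableSet_Icc; intro y _; exact (hdiv y).symm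

lemma abs_int_le {α : Type*} [MeasurableSpace α] (μ : MeasureTheory.Measure α) (g : α → ℝ) :
    |∫ x, g x ∂μ| ≤ ∫ x, |g x| ∂μ := by
  simpa [Real.norm_eq_abs] using MeasureTheory.norm_integral_le_integral_norm (μ := μ) g

set_option maxHeartbeats 1600000 in
theorem engine {m : ℕ}
    (Ω : Set (EuclideanSpace ℝ (Fin (m+1)))) (hΩopen : IsOpen Ω)
    (hΩbdd : Bornology.IsBounded Ω)
    (Φ : EuclideanSpace ℝ (Fin (m+1)) → ℝ) (hΦ : ContDiff ℝ (⊤ : ℕ∞) Φ)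
    (hΩdef : Ω = {x | Φ x < 0}) (hfront : frontier Ω = {x | Φ x = 0})
    (hΦgrad : ∀ x ∈ frontier Ω, gradient Φ x ≠ 0)
    (F : EuclideanSpace ℝ (Fin (m+1)) → EuclideanSpace ℝ (Fin (m+1)))
    (hF : ContDiff ℝ 1 F)
    (hFn : ∀ x ∈ frontier Ω, ⟪F x, gradient Φ x⟫ = (0:ℝ)) :
    ∫ x in Ω, (∑ i, fderiv ℝ F x (EuclideanSpace.single i 1) i) = 0 := by
  classical
  rcases Ω.eq_empty_or_nonempty with rfl | hΩne
  · simp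
  have hΦc : Continuous Φ := hΦ.continuous
  have hK : IsCompact (closure Ω) := hΩbdd.isCompact_closure
  have hKc : IsClosed (closure Ω) := isClosed_closure
  -- frontier nonempty
  have hfr_cpt : IsCompact (frontier Ω) :=
    hK.of_isClosed_subset isClosed_frontier (frontier_subset_closure)
  have hfr_ne : (frontier Ω).Nonempty := by
    by_contra hfe
    rw [not_nonempty_iff_eq_empty] at hfe
    have hclopen : IsClopen Ω := isClopen_iff_frontier_eq_empty.2 hfe
    rcases isClopen_iff.1 hclopen with rfl | rfl
    · exact hΩne.ne_empty rfl
    · obtain ⟨R, hR⟩ := hΩbdd.subset_ball 0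
      have := hR (Set.mem_univ (EuclideanSpace.single (0 : Fin (m+1)) (|R|+1)))
      rw [Metric.mem_ball, dist_zero_right, EuclideanSpace.norm_single, Real.norm_eq_abs] at this
      have h2 : |(|R|+1)| = |R|+1 := abs_of_pos (by positivity)
      rw [h2] at this
      linarith [le_abs_self R]
  -- gradient of Φ
  have hgradΦ1 : ContDiff ℝ 1 (gradient Φ) := by
    have h1 : ContDiff ℝ 1 (fderiv ℝ Φ) := hΦ.fderiv_right (by exact WithTop.coe_le_coe.2 le_top)
    exact ((InnerProductSpace.toDual ℝ _).symm.contDiff.comp h1 : _)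
  have hgradΦc : Continuous (gradient Φ) := hgradΦ1.continuous
  have hfderivΦ : ∀ x v, fderiv ℝ Φ x v = ⟪gradient Φ x, v⟫ := by
    intro x v
    have h := ((hΦ.differentiable (by simp)).differentiableAt (x := x)).hasGradientAt
    rw [hasGradientAt_iff_hasFDerivAt] at h
    rw [h.fderiv]
    simp
  -- Φ ≤ 0 on closure
  have hΦle : ∀ x ∈ closure Ω, Φ x ≤ 0 := by
    intro x hx
    have hsub : closure Ω ⊆ {x | Φ x ≤ 0} := by
      apply closure_minimal _ (isClosed_le hΦc continuous_const)
      rw [hΩdef]; intro y hy; simp only [Set.mem_setOf_eq] at hy ⊢; linarith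
    exact hsub hx
  have hΦpos_out : ∀ x, x ∉ closure Ω → 0 ≤ Φ x := by
    intro x hx
    by_contra hcon
    push_neg at hcon
    exact hx (subset_closure (by rw [hΩdef]; exact hcon))
  -- divergence of a C¹ field is continuous
  have hdivc : ∀ (W : EuclideanSpace ℝ (Fin (m+1)) → EuclideanSpace ℝ (Fin (m+1))),
      ContDiff ℝ 1 W → Continuous fun x => ∑ i, fderiv ℝ W x (EuclideanSpace.single i 1) i := by
    intro W hW
    have h1 : Continuous (fderiv ℝ W) := (contDiff_one_iff_fderiv.1 hW).2
    apply continuous_finset_sum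
    intro i _
    have h2 : Continuous fun x => fderiv ℝ W x (EuclideanSpace.single i 1) :=
      h1.clm_apply continuous_const
    exact (PiLp.continuous_apply (p := 2) (β := fun _ => ℝ) i).comp h2
  set D : EuclideanSpace ℝ (Fin (m+1)) → ℝ :=
    fun x => ∑ i, fderiv ℝ F x (EuclideanSpace.single i 1) i with hDdef
  have hDc : Continuous D := hdivc F hF
  set Q : EuclideanSpace ℝ (Fin (m+1)) → ℝ := fun x => ⟪F x, gradient Φ x⟫ with hQdef
  have hQc : Continuous Q := (hF.continuous).inner hgradΦc
  -- min of ‖∇Φ‖ on frontier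
  obtain ⟨z₀, hz₀mem, hz₀min⟩ := hfr_cpt.exists_isMinOn hfr_ne (hgradΦc.norm.continuousOn)
  set c : ℝ := ‖gradient Φ z₀‖ / 2 with hcdef
  have hcpos : 0 < c := by
    have := hΦgrad z₀ hz₀mem
    have : 0 < ‖gradient Φ z₀‖ := norm_pos_iff.2 this
    positivity
  have hcfr : ∀ x ∈ frontier Ω, c < ‖gradient Φ x‖ := by
    intro x hx
    have h1 : ‖gradient Φ z₀‖ ≤ ‖gradient Φ x‖ := hz₀min hx
    have h2 : 0 < ‖gradient Φ z₀‖ := by linarith [hcpos, hcdef ▸ hcpos]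
    rw [hcdef]; linarith
  set V₁ : Set (EuclideanSpace ℝ (Fin (m+1))) := {x | c < ‖gradient Φ x‖} with hV₁def
  have hV₁open : IsOpen V₁ := isOpen_lt continuous_const hgradΦc.norm
  obtain ⟨r, hr0, hrsub⟩ := hfr_cpt.exists_cthickening_subset_open hV₁open
    (fun x hx => hcfr x hx)
  -- smooth cutoff χ
  obtain ⟨f, hf0, hf1, hf01⟩ := exists_contMDiffMap_zero_one_of_isClosed (n := (⊤ : ℕ∞))
    (modelWithCornersSelf ℝ (EuclideanSpace ℝ (Fin (m+1))))
    (Metric.isOpen_thickening.isClosed_compl)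
    (Metric.isClosed_cthickening (δ := r/2) (E := frontier Ω))
    (Set.disjoint_left.2 fun x hxs hxt =>
      hxs (Metric.cthickening_subset_thickening' hr0 (by linarith) _ hxt))
  set χ : EuclideanSpace ℝ (Fin (m+1)) → ℝ := ⇑f with hχdef
  have hχsm : ContDiff ℝ 1 χ := by
    have := f.contMDiff
    rw [contMDiff_iff_contDiff] at this
    exact this.of_le (by exact_mod_cast le_top)
  set N : Set (EuclideanSpace ℝ (Fin (m+1))) := Metric.thickening (r/2) (frontier Ω) with hNdef
  have hNopen : IsOpen N := Metric.isOpen_thickening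
  have hNfr : frontier Ω ⊆ N := Metric.self_subset_thickening (by linarith) _
  have hχ1 : ∀ x ∈ N, χ x = 1 := fun x hx =>
    hf1 (Metric.thickening_subset_cthickening _ _ hx)
  have hχ0 : ∀ x, x ∉ Metric.thickening r (frontier Ω) → χ x = 0 := fun x hx => hf0 hx
  have hχV₁ : ∀ x, χ x ≠ 0 → c < ‖gradient Φ x‖ := by
    intro x hx
    by_contra hcon
    apply hx
    apply hχ0
    intro hmem
    exact hcon (hrsub (Metric.thickening_subset_cthickening _ _ hmem))
  have hχ01 : ∀ x, χ x ∈ Set.Icc (0:ℝ) 1 := hf01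
  set W₀ : EuclideanSpace ℝ (Fin (m+1)) → EuclideanSpace ℝ (Fin (m+1)) :=
    fun x => χ x • gradient Φ x with hW₀def
  have hW₀sm : ContDiff ℝ 1 W₀ := hχsm.smul hgradΦ1
  set D₀ : EuclideanSpace ℝ (Fin (m+1)) → ℝ :=
    fun x => ∑ i, fderiv ℝ W₀ x (EuclideanSpace.single i 1) i with hD₀def
  have hD₀c : Continuous D₀ := hdivc W₀ hW₀sm
  set Q₀ : EuclideanSpace ℝ (Fin (m+1)) → ℝ := fun x => ⟪W₀ x, gradient Φ x⟫ with hQ₀def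
  have hQ₀eq : ∀ x, Q₀ x = χ x * ‖gradient Φ x‖^2 := by
    intro x
    rw [hQ₀def]
    simp only [hW₀def]
    rw [real_inner_smul_left, real_inner_self_eq_norm_sq]
  have hQ₀nonneg : ∀ x, 0 ≤ Q₀ x := by
    intro x; rw [hQ₀eq x]
    have := (hχ01 x).1; positivity
  -- bounds
  obtain ⟨M, hM⟩ := hK.exists_bound_of_continuousOn hDc.continuousOn
  obtain ⟨M₀, hM₀⟩ := hK.exists_bound_of_continuousOn hD₀c.continuousOn
  set Mp : ℝ := max M 0 with hMpdef
  set M₀p : ℝ := max M₀ 0 with hM₀pdef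
  have hMp0 : 0 ≤ Mp := le_max_right _ _
  have hM₀p0 : 0 ≤ M₀p := le_max_right _ _
  have hMb : ∀ x ∈ closure Ω, |D x| ≤ Mp := fun x hx => le_trans (hM x hx) (le_max_left _ _)
  have hM₀b : ∀ x ∈ closure Ω, |D₀ x| ≤ M₀p := fun x hx => le_trans (hM₀ x hx) (le_max_left _ _)
  set volK : ℝ := (volume (closure Ω)).toReal with hvolKdef
  have hvolK0 : 0 ≤ volK := ENNReal.toReal_nonneg
  -- main estimate
  have hmain : ∀ η : ℝ, 0 < η → |∫ x in Ω, D x| ≤ η := by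
    intro η hη
    set η₂ : ℝ := (η/2) * c^2 / (M₀p * volK + 1) with hη₂def
    have hη₂pos : 0 < η₂ := by
      apply div_pos (by positivity) (by positivity)
    set η₁ : ℝ := (η/2) / (Mp + 1) with hη₁def
    have hη₁pos : 0 < η₁ := by apply div_pos (by linarith) (by linarith)
    obtain ⟨ε₁, hε₁pos, hε₁⟩ := compact_aux hΦc hΩdef hfront hK {x | η₂ ≤ |Q x|}
      (isClosed_le continuous_const hQc.abs)
      (fun x hx hmem => by
        have hq0 : Q x = 0 := hFn x hx
        simp only [Set.mem_setOf_eq, hq0, abs_zero] at hmem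
        linarith)
    obtain ⟨ε₂, hε₂pos, hε₂⟩ := compact_aux hΦc hΩdef hfront hK Nᶜ
      (hNopen.isClosed_compl) (fun x hx hmem => hmem (hNfr hx))
    obtain ⟨ε₃, hε₃pos, hε₃⟩ := compact_aux hΦc hΩdef hfront hK {x | ‖gradient Φ x‖ ≤ c}
      (isClosed_le hgradΦc.norm continuous_const)
      (fun x hx hmem => absurd (hcfr x hx) (by simpa using hmem))
    obtain ⟨ε₄, hε₄pos, hε₄⟩ := measure_aux hΦc hΩopen hΩbdd hΩdef hη₁pos
    set ε : ℝ := min (min ε₁ ε₂) (min ε₃ ε₄) with hεdef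
    have hεpos : 0 < ε := lt_min (lt_min hε₁pos hε₂pos) (lt_min hε₃pos hε₄pos)
    have hεle₁ : ε ≤ ε₁ := le_trans (min_le_left _ _) (min_le_left _ _)
    have hεle₂ : ε ≤ ε₂ := le_trans (min_le_left _ _) (min_le_right _ _)
    have hεle₃ : ε ≤ ε₃ := le_trans (min_le_right _ _) (min_le_left _ _)
    have hεle₄ : ε ≤ ε₄ := le_trans (min_le_right _ _) (min_le_right _ _)
    -- cutoff functions
    set gee : ℝ → ℝ := fun t => qstep (-(1/ε) * t) with hgeedef
    set dee : ℝ → ℝ := fun t => qstep' (-(1/ε) * t) * (-(1/ε)) with hdeedef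
    have hgeec : Continuous gee := continuous_qstep.comp (continuous_const.mul continuous_id)
    have hdeec : Continuous dee :=
      (continuous_qstep'.comp (continuous_const.mul continuous_id)).mul continuous_const
    have hgeed : ∀ t, HasDerivAt gee (dee t) t := by
      intro t
      have hlin : HasDerivAt (fun s : ℝ => -(1/ε) * s) (-(1/ε)) t := by
        simpa using (hasDerivAt_id t).const_mul (-(1/ε))
      exact (hasDerivAt_qstep _).comp t hlin
    have hgee0 : ∀ t, 0 ≤ t → gee t = 0 := by
      intro t ht
      apply qstep_of_nonpos
      have h1 : 0 < 1/ε := by positivity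
      nlinarith
    have hgee1 : ∀ t, t ≤ -ε → gee t = 1 := by
      intro t ht
      apply qstep_of_one_le
      have h2 : -(1/ε)*t = (-t)/ε := by ring
      rw [h2, le_div_iff₀ hεpos]; linarith
    have hgee01 : ∀ t, gee t ∈ Set.Icc (0:ℝ) 1 := fun t => ⟨qstep_nonneg _, qstep_le_one _⟩
    have hdee_nonpos : ∀ t, dee t ≤ 0 := by
      intro t
      have h1 : 0 ≤ qstep' (-(1/ε) * t) := qstep'_nonneg _
      have h2 : -(1/ε) ≤ 0 := by
        have : 0 < 1/ε := by positivity
        linarith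
      exact mul_nonpos_of_nonneg_of_nonpos h1 h2
    have hdee_supp : ∀ t, dee t ≠ 0 → -ε < t ∧ t < 0 := by
      intro t ht
      have hq : qstep' (-(1/ε)*t) ≠ 0 := by
        intro h
        apply ht
        show qstep' (-(1/ε)*t) * -(1/ε) = 0
        rw [h, zero_mul]
      have h1 : 0 < -(1/ε)*t := lt_of_not_ge fun h => hq (qstep'_of_nonpos h)
      have h2 : -(1/ε)*t < 1 := lt_of_not_ge fun h => hq (qstep'_of_one_le h)
      have h3 : (1/ε)*ε = 1 := by field_simp
      constructor
      · nlinarith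
      · nlinarith
    have hsupp_gee : ∀ x, x ∉ closure Ω → gee (Φ x) = 0 := fun x hx => hgee0 _ (hΦpos_out x hx)
    have hsupp_dee : ∀ x, x ∉ closure Ω → dee (Φ x) = 0 := by
      intro x hx
      by_contra hne
      have h2 := hdee_supp _ hne
      linarith [hΦpos_out x hx, h2.2]
    -- divergence identity
    have identity : ∀ (W : EuclideanSpace ℝ (Fin (m+1)) → EuclideanSpace ℝ (Fin (m+1))),
        ContDiff ℝ 1 W →
        ∫ x, (gee (Φ x) * (∑ i, fderiv ℝ W x (EuclideanSpace.single i 1) i)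
          + dee (Φ x) * ⟪W x, gradient Φ x⟫) = 0 := by
      intro W hW
      set G := fun x => gee (Φ x) • W x with hGdef
      set G' := fun x => gee (Φ x) • fderiv ℝ W x
        + ((dee (Φ x)) • fderiv ℝ Φ x).smulRight (W x) with hG'def
      have hWd : Differentiable ℝ W := hW.differentiable one_ne_zero
      have hd : ∀ x, HasFDerivAt G (G' x) x := by
        intro x
        have hc : HasFDerivAt (fun y => gee (Φ y)) ((dee (Φ x)) • fderiv ℝ Φ x) x :=
          (hgeed (Φ x)).comp_hasFDerivAt x ((hΦ.differentiable (by simp)) x).hasFDerivAt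
        exact hc.smul (hWd x).hasFDerivAt
      have hsupp : HasCompactSupport G := by
        apply HasCompactSupport.intro hK
        intro x hx
        show gee (Φ x) • W x = 0
        rw [hsupp_gee x hx, zero_smul]
      have hdiveq : ∀ x, (∑ i, G' x (EuclideanSpace.single i 1) i)
          = gee (Φ x) * (∑ i, fderiv ℝ W x (EuclideanSpace.single i 1) i)
            + dee (Φ x) * ⟪W x, gradient Φ x⟫ := by
        intro x
        have hsum : ∀ i : Fin (m+1), G' x (EuclideanSpace.single i 1) i
            = gee (Φ x) * (fderiv ℝ W x (EuclideanSpace.single i 1) i)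
              + dee (Φ x) * ((gradient Φ x) i * (W x) i) := by
          intro i
          show (gee (Φ x) • fderiv ℝ W x
            + ((dee (Φ x)) • fderiv ℝ Φ x).smulRight (W x)) (EuclideanSpace.single i 1) i = _
          rw [ContinuousLinearMap.add_apply, ContinuousLinearMap.smulRight_apply]
          rw [ContinuousLinearMap.smul_apply, ContinuousLinearMap.smul_apply]
          rw [PiLp.add_apply, PiLp.smul_apply, PiLp.smul_apply]
          rw [hfderivΦ]
          have hinner : ⟪gradient Φ x, EuclideanSpace.single i 1⟫ = (gradient Φ x) i := by
            rw [EuclideanSpace.inner_single_right]; simp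
          rw [hinner]
          simp only [smul_eq_mul]
          ring
        rw [Finset.sum_congr rfl (fun i _ => hsum i)]
        rw [Finset.sum_add_distrib, ← Finset.mul_sum, ← Finset.mul_sum]
        congr 1
      have hcontdiv : Continuous fun x => ∑ i, G' x (EuclideanSpace.single i 1) i := by
        rw [show (fun x => ∑ i, G' x (EuclideanSpace.single i 1) i)
          = fun x => gee (Φ x) * (∑ i, fderiv ℝ W x (EuclideanSpace.single i 1) i)
            + dee (Φ x) * ⟪W x, gradient Φ x⟫ from funext hdiveq]
        exact ((hgeec.comp hΦc).mul (hdivc W hW)).add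
          ((hdeec.comp hΦc).mul ((hW.continuous).inner hgradΦc))
      have hzero := div_integral_zero G G' hd hsupp hcontdiv
      simp only [hdiveq] at hzero
      exact hzero
    -- the four integrands
    set A1 : EuclideanSpace ℝ (Fin (m+1)) → ℝ := fun x => gee (Φ x) * D x with hA1def
    set A2 : EuclideanSpace ℝ (Fin (m+1)) → ℝ := fun x => dee (Φ x) * Q x with hA2def
    set B1 : EuclideanSpace ℝ (Fin (m+1)) → ℝ := fun x => gee (Φ x) * D₀ x with hB1def
    set B2 : EuclideanSpace ℝ (Fin (m+1)) → ℝ := fun x => dee (Φ x) * Q₀ x with hB2def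
    have hA1i : Integrable A1 := Continuous.integrable_of_hasCompactSupport
      ((hgeec.comp hΦc).mul hDc)
      (HasCompactSupport.intro hK fun x hx => by
        show gee (Φ x) * D x = 0
        rw [hsupp_gee x hx, zero_mul])
    have hA2i : Integrable A2 := Continuous.integrable_of_hasCompactSupport
      ((hdeec.comp hΦc).mul hQc)
      (HasCompactSupport.intro hK fun x hx => by
        show dee (Φ x) * Q x = 0
        rw [hsupp_dee x hx, zero_mul])
    have hB1i : Integrable B1 := Continuous.integrable_of_hasCompactSupport
      ((hgeec.comp hΦc).mul hD₀c)
      (HasCompactSupport.intro hK fun x hx => by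
        show gee (Φ x) * D₀ x = 0
        rw [hsupp_gee x hx, zero_mul])
    have hB2i : Integrable B2 := Continuous.integrable_of_hasCompactSupport
      ((hdeec.comp hΦc).mul ((hW₀sm.continuous).inner hgradΦc))
      (HasCompactSupport.intro hK fun x hx => by
        show dee (Φ x) * Q₀ x = 0
        rw [hsupp_dee x hx, zero_mul])
    have hIF' : (∫ x, A1 x) + (∫ x, A2 x) = 0 := by
      rw [← integral_add hA1i hA2i]
      exact identity F hF
    have hIW' : (∫ x, B1 x) + (∫ x, B2 x) = 0 := by
      rw [← integral_add hB1i hB2i]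
      exact identity W₀ hW₀sm
    -- Term 2 estimate
    have hc2ne : c^2 ≠ 0 := by positivity
    have hT2 : |∫ x, A2 x| ≤ η/2 := by
      have hptwise : ∀ x, |A2 x| ≤ (η₂/c^2) * (-B2 x) := by
        intro x
        by_cases hz : dee (Φ x) = 0
        · show |dee (Φ x) * Q x| ≤ (η₂/c^2) * (-(dee (Φ x) * Q₀ x))
          rw [hz]
          simp
        · obtain ⟨hlt, hlt0⟩ := hdee_supp _ hz
          have hxΩ : x ∈ Ω := by rw [hΩdef]; exact hlt0
          have hxK : x ∈ closure Ω := subset_closure hxΩ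
          have hnP₁ := hε₁ x hxK (by linarith)
          have hnP₂ := hε₂ x hxK (by linarith)
          have hnP₃ := hε₃ x hxK (by linarith)
          have hQsmall : |Q x| < η₂ := by
            by_contra hge
            push_neg at hge
            exact hnP₁ hge
          have hχx : χ x = 1 := hχ1 x (Set.notMem_compl_iff.1 hnP₂)
          have hgnorm : c < ‖gradient Φ x‖ := by
            by_contra hge
            push_neg at hge
            exact hnP₃ hge
          have hd0 : 0 ≤ -dee (Φ x) := by linarith [hdee_nonpos (Φ x)]
          have hB2x : -B2 x = (-dee (Φ x)) * (χ x * ‖gradient Φ x‖^2) := by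
            show -(dee (Φ x) * Q₀ x) = _
            rw [hQ₀eq]; ring
          have hA2x : |A2 x| = (-dee (Φ x)) * |Q x| := by
            show |dee (Φ x) * Q x| = _
            rw [abs_mul, abs_of_nonpos (hdee_nonpos _)]
          rw [hB2x, hχx, hA2x, one_mul]
          have hc2le : c^2 ≤ ‖gradient Φ x‖^2 := by nlinarith
          have hstep1 : (-dee (Φ x)) * |Q x| ≤ (-dee (Φ x)) * η₂ :=
            mul_le_mul_of_nonneg_left hQsmall.le hd0
          have hstep2 : (-dee (Φ x)) * η₂ = (η₂/c^2) * ((-dee (Φ x)) * c^2) := by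
            field_simp
          have hstep3 : (η₂/c^2) * ((-dee (Φ x)) * c^2)
              ≤ (η₂/c^2) * ((-dee (Φ x)) * ‖gradient Φ x‖^2) := by
            apply mul_le_mul_of_nonneg_left _ (by positivity)
            exact mul_le_mul_of_nonneg_left hc2le hd0
          linarith
      have h1 : |∫ x, A2 x| ≤ ∫ x, |A2 x| := abs_int_le _ _
      have h2 : (∫ x, |A2 x|) ≤ ∫ x, (η₂/c^2) * (-B2 x) :=
        integral_mono hA2i.abs ((hB2i.neg).const_mul _) hptwise
      have h3 : (∫ x, (η₂/c^2) * (-B2 x)) = (η₂/c^2) * (- ∫ x, B2 x) := by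
        rw [MeasureTheory.integral_const_mul]
        congr 1
        exact integral_neg _
      have h4 : (- ∫ x, B2 x) = ∫ x, B1 x := by linarith
      have h5 : (∫ x, B1 x) ≤ M₀p * volK := by
        have heq : (∫ x, B1 x) = ∫ x in closure Ω, B1 x :=
          (setIntegral_eq_integral_of_forall_compl_eq_zero (fun x hx => by
            show gee (Φ x) * D₀ x = 0
            rw [hsupp_gee x hx, zero_mul])).symm
        rw [heq]
        have hb : ∫ x in closure Ω, B1 x ≤ ∫ _x in closure Ω, M₀p := by
          apply setIntegral_mono_on hB1i.integrableOn
            (integrableOn_const hK.measure_lt_top.ne) hKc.measurableSet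
          intro x hx
          calc B1 x ≤ |B1 x| := le_abs_self _
          _ = gee (Φ x) * |D₀ x| := by
              show |gee (Φ x) * D₀ x| = _
              rw [abs_mul, abs_of_nonneg (hgee01 _).1]
          _ ≤ 1 * M₀p := mul_le_mul (hgee01 _).2 (hM₀b x hx) (abs_nonneg _) one_pos.le
          _ = M₀p := one_mul _
        calc ∫ x in closure Ω, B1 x ≤ ∫ _x in closure Ω, M₀p := hb
        _ = M₀p * volK := by
            rw [setIntegral_const, smul_eq_mul, mul_comm]; rfl
      have h6 : |∫ x, A2 x| ≤ (η₂/c^2) * (M₀p * volK) := by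
        calc |∫ x, A2 x| ≤ (η₂/c^2) * (- ∫ x, B2 x) := by
              rw [← h3]; exact h1.trans h2
        _ = (η₂/c^2) * (∫ x, B1 x) := by rw [h4]
        _ ≤ (η₂/c^2) * (M₀p * volK) := mul_le_mul_of_nonneg_left h5 (by positivity)
      have h7 : (η₂/c^2) * (M₀p * volK) ≤ η/2 := by
        have hX : 0 ≤ M₀p*volK := by positivity
        have heq2 : (η₂/c^2) * (M₀p*volK) = (η/2) * ((M₀p*volK)/(M₀p*volK+1)) := by
          rw [hη₂def]
          field_simp
        rw [heq2]
        have hfrac : (M₀p*volK)/(M₀p*volK+1) ≤ 1 := by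
          rw [div_le_one (by positivity)]; linarith
        nlinarith
      linarith
    -- Term 1 estimate
    have hT1 : |(∫ x in Ω, D x) - ∫ x, A1 x| ≤ η/2 := by
      have hA1set : (∫ x, A1 x) = ∫ x in Ω, A1 x :=
        (setIntegral_eq_integral_of_forall_compl_eq_zero (fun x hx => by
          show gee (Φ x) * D x = 0
          have h0 : 0 ≤ Φ x := by
            by_contra hc0
            push_neg at hc0
            exact hx (by rw [hΩdef]; exact hc0)
          rw [hgee0 _ h0, zero_mul])).symm
      have hDint : IntegrableOn D Ω :=
        (hDc.locallyIntegrable.integrableOn_isCompact hK).mono_set subset_closure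
      have hA1int : IntegrableOn A1 Ω := hA1i.integrableOn
      rw [hA1set, ← integral_sub hDint hA1int]
      set S : Set (EuclideanSpace ℝ (Fin (m+1))) := {y | -ε < Φ y} with hSdef
      have hSmeas : MeasurableSet S := (isOpen_lt continuous_const hΦc).measurableSet
      have hmono : ∀ x ∈ Ω, |D x - A1 x| ≤ Set.indicator S (fun _ => Mp) x := by
        intro x hx
        by_cases hcase : x ∈ S
        · rw [Set.indicator_of_mem hcase]
          have h1 : |D x - A1 x| = (1 - gee (Φ x)) * |D x| := by
            show |D x - gee (Φ x) * D x| = _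
            rw [show D x - gee (Φ x) * D x = (1 - gee (Φ x)) * D x by ring]
            rw [abs_mul, abs_of_nonneg (by linarith [(hgee01 (Φ x)).2])]
          rw [h1]
          have hb := hMb x (subset_closure hx)
          nlinarith [(hgee01 (Φ x)).1, abs_nonneg (D x)]
        · rw [Set.indicator_of_notMem hcase]
          have hle : Φ x ≤ -ε := by
            simp only [hSdef, Set.mem_setOf_eq, not_lt] at hcase
            linarith
          show |D x - gee (Φ x) * D x| ≤ 0
          rw [hgee1 _ hle, one_mul, sub_self, abs_zero]
      calc |∫ x in Ω, (D x - A1 x)| ≤ ∫ x in Ω, |D x - A1 x| := abs_int_le _ _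
      _ ≤ ∫ x in Ω, Set.indicator S (fun _ => Mp) x := by
            apply setIntegral_mono_on ((hDint.sub hA1int).abs)
              (((integrableOn_const hΩbdd.measure_lt_top.ne) :
                IntegrableOn (fun _ => Mp) Ω volume).indicator hSmeas)
              hΩopen.measurableSet hmono
      _ = (volume (Ω ∩ S)).toReal * Mp := by
            rw [setIntegral_indicator hSmeas, setIntegral_const, smul_eq_mul]; rfl
      _ ≤ η/2 := by
            have hsub2 : Ω ∩ S ⊆ Ω ∩ {y | -ε₄ < Φ y} := by
              intro x hx
              refine ⟨hx.1, ?_⟩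
              have h2 := hx.2
              simp only [hSdef, Set.mem_setOf_eq] at h2 ⊢
              linarith
            have hfin4 : volume (Ω ∩ {y | -ε₄ < Φ y}) ≠ ⊤ :=
              (ne_of_lt ((hΩbdd.subset Set.inter_subset_left).measure_lt_top))
            have hv1 : (volume (Ω ∩ S)).toReal ≤ (volume (Ω ∩ {y | -ε₄ < Φ y})).toReal :=
              ENNReal.toReal_mono hfin4 (measure_mono hsub2)
            have hv2 : (volume (Ω ∩ S)).toReal ≤ η₁ := le_trans hv1 (le_of_lt hε₄)
            have : (volume (Ω ∩ S)).toReal * Mp ≤ η₁ * Mp :=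
              mul_le_mul_of_nonneg_right hv2 hMp0
            have hη₁Mp : η₁ * Mp ≤ η/2 := by
              rw [hη₁def]
              rw [div_mul_eq_mul_div, div_le_iff₀ (by linarith)]
              nlinarith
            linarith
    have hfinal : (∫ x, A1 x) = - ∫ x, A2 x := by linarith
    calc |∫ x in Ω, D x| ≤ |(∫ x in Ω, D x) - ∫ x, A1 x| + |∫ x, A1 x| := by
          have habs := abs_add_le ((∫ x in Ω, D x) - ∫ x, A1 x) (∫ x, A1 x)
          simpa using habs
    _ ≤ η/2 + η/2 := add_le_add hT1 (by rw [hfinal, abs_neg]; exact hT2)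
    _ = η := by ring
  -- conclude
  by_contra hcon
  have h1 : 0 < |∫ x in Ω, D x| := abs_pos.2 hcon
  have := hmain (|∫ x in Ω, D x|/2) (by linarith)
  linarith


set_option maxHeartbeats 1600000 in
/-- The `p = 2` case: if `Ω ⊂ ℝⁿ` (`n ≥ 2`) is a bounded open set with smooth boundary
(described by a smooth defining function `Φ` with nonvanishing gradient on `∂Ω`),
`h : (0,B) → (0,∞)` is continuous and integrable near `0` with primitive `H(λ) = ∫₀^λ h`
and transform `T_h = H/h`, `u ∈ C²(Ω̄)` satisfies `0 < u < B` on `Ω̄` and the Neumann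
condition `∇u · n = 0` on `∂Ω`, then
`∫_Ω |∇u|² h(u) ≤ ∫_Ω |Δu| |T_h(u)| h(u)`. -/
theorem weighted_inequality_p_two (n : ℕ) (hn : 2 ≤ n)
    (Ω : Set (EuclideanSpace ℝ (Fin n))) (hΩopen : IsOpen Ω)
    (hΩbdd : Bornology.IsBounded Ω)
    (Φ : EuclideanSpace ℝ (Fin n) → ℝ) (hΦ : ContDiff ℝ (⊤ : ℕ∞) Φ)
    (hΩdef : Ω = {x | Φ x < 0}) (hfront : frontier Ω = {x | Φ x = 0})
    (hΦgrad : ∀ x ∈ frontier Ω, gradient Φ x ≠ 0)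
    (B : ℝ≥0∞) (hB : 0 < B) (h : ℝ → ℝ)
    (hcont : ContinuousOn h {x : ℝ | 0 < x ∧ ENNReal.ofReal x < B})
    (hpos : ∀ x : ℝ, 0 < x → ENNReal.ofReal x < B → 0 < h x)
    (hint : ∀ lam : ℝ, 0 < lam → ENNReal.ofReal lam < B → IntegrableOn h (Ioo 0 lam))
    (u : EuclideanSpace ℝ (Fin n) → ℝ) (hu : ContDiff ℝ 2 u)
    (hrange : ∀ x ∈ closure Ω, 0 < u x ∧ ENNReal.ofReal (u x) < B)
    (hNeumann : ∀ x ∈ frontier Ω, ⟪gradient u x, gradient Φ x⟫ = (0 : ℝ)) :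
    ∫ x in Ω, ‖gradient u x‖ ^ 2 * h (u x) ≤
      ∫ x in Ω,
        |laplacian' u x| * |(∫ s in (0:ℝ)..(u x), h s) / h (u x)| * h (u x) := by
  classical
  obtain ⟨m, rfl⟩ : ∃ m, n = m + 1 := ⟨n - 1, by omega⟩
  rcases Ω.eq_empty_or_nonempty with rfl | hΩne
  · simp
  have hK : IsCompact (closure Ω) := hΩbdd.isCompact_closure
  have hKne : (closure Ω).Nonempty := hΩne.closure
  have huc : Continuous u := hu.continuous
  obtain ⟨x₁, hx₁K, hx₁min⟩ := hK.exists_isMinOn hKne huc.continuousOn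
  obtain ⟨x₂, hx₂K, hx₂max⟩ := hK.exists_isMaxOn hKne huc.continuousOn
  set α : ℝ := u x₁ with hαdef
  set β : ℝ := u x₂ with hβdef
  have hαpos : 0 < α := (hrange x₁ hx₁K).1
  have hβB : ENNReal.ofReal β < B := (hrange x₂ hx₂K).2
  have hαβ : α ≤ β := hx₂max hx₁K
  have hβpos : 0 < β := lt_of_lt_of_le hαpos hαβ
  have huK : ∀ x ∈ closure Ω, u x ∈ Icc α β := fun x hx => ⟨hx₁min hx, hx₂max hx⟩
  have hIccS : Icc α β ⊆ {x : ℝ | 0 < x ∧ ENNReal.ofReal x < B} := fun t ht =>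
    ⟨lt_of_lt_of_le hαpos ht.1, lt_of_le_of_lt (ENNReal.ofReal_le_ofReal ht.2) hβB⟩
  -- clamped weight
  set clmp : ℝ → ℝ := fun t => max α (min β t) with hclmpdef
  have hclmpc : Continuous clmp := continuous_const.max (continuous_const.min continuous_id)
  have hclmpmem : ∀ t, clmp t ∈ Icc α β :=
    fun t => ⟨le_max_left _ _, max_le hαβ (min_le_left _ _)⟩
  have hclmpid : ∀ t ∈ Icc α β, clmp t = t := by
    intro t ht
    rw [hclmpdef]
    simp only
    rw [min_eq_right ht.2, max_eq_right ht.1]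
  set ht : ℝ → ℝ := fun t => h (clmp t) with hhtdef
  have hhtc : Continuous ht :=
    (hcont.mono hIccS).comp_continuous hclmpc hclmpmem
  have hht_eq : ∀ t ∈ Icc α β, ht t = h t := by
    intro t htm
    rw [hhtdef]
    simp only
    rw [hclmpid t htm]
  -- modified primitive
  set Ht : ℝ → ℝ := fun t => (∫ s in (0:ℝ)..α, h s) + ∫ s in α..t, ht s with hHtdef
  have hHd : ∀ t, HasDerivAt Ht (ht t) t := by
    intro t
    apply HasDerivAt.const_add
    exact intervalIntegral.integral_hasDerivAt_right
      (hhtc.intervalIntegrable _ _)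
      (ContinuousOn.stronglyMeasurableAtFilter isOpen_univ hhtc.continuousOn t (mem_univ t))
      hhtc.continuousAt
  have hHt1 : ContDiff ℝ 1 Ht := by
    rw [contDiff_one_iff_deriv]
    constructor
    · exact fun t => (hHd t).differentiableAt
    · have : deriv Ht = ht := funext fun t => (hHd t).deriv
      rw [this]; exact hhtc
  -- H agrees with the true primitive on [α, β]
  have hIβ : IntegrableOn h (Ioc 0 β) := by
    have h1 := hint β hβpos hβB
    exact h1.congr_set_ae Ioo_ae_eq_Ioc.symm
  have hII : ∀ a b : ℝ, 0 ≤ a → b ≤ β → a ≤ b → IntervalIntegrable h volume a b := by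
    intro a b ha hb hab
    rw [intervalIntegrable_iff_integrableOn_Ioc_of_le hab]
    apply hIβ.mono_set
    exact Ioc_subset_Ioc (by linarith) hb
  have hH_eq : ∀ x ∈ closure Ω, Ht (u x) = ∫ s in (0:ℝ)..(u x), h s := by
    intro x hx
    obtain ⟨h1, h2⟩ := huK x hx
    have e1 : (∫ s in α..(u x), ht s) = ∫ s in α..(u x), h s := by
      apply intervalIntegral.integral_congr
      intro s hs
      rw [uIcc_of_le h1] at hs
      exact hht_eq s ⟨hs.1, le_trans hs.2 h2⟩
    rw [hHtdef]
    simp only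
    rw [e1]
    exact intervalIntegral.integral_add_adjacent_intervals
      (hII 0 α le_rfl hαβ hαpos.le) (hII α (u x) hαpos.le h2 h1)
  -- gradient of u
  have hgradc : ContDiff ℝ 1 (gradient u) := by
    have h1 : ContDiff ℝ 1 (fderiv ℝ u) := hu.fderiv_right (by norm_num)
    exact ((InnerProductSpace.toDual ℝ _).symm.contDiff.comp h1 : _)
  have hud : Differentiable ℝ u := hu.differentiable two_ne_zero
  have hfderivu : ∀ x v, fderiv ℝ u x v = ⟪gradient u x, v⟫ := by
    intro x v
    have hg := (hud x).hasGradientAt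
    rw [hasGradientAt_iff_hasFDerivAt] at hg
    rw [hg.fderiv]
    simp
  -- the vector field
  set F : EuclideanSpace ℝ (Fin (m+1)) → EuclideanSpace ℝ (Fin (m+1)) :=
    fun x => Ht (u x) • gradient u x with hFdef
  have hF : ContDiff ℝ 1 F := (hHt1.comp (hu.of_le one_le_two)).smul hgradc
  have hFderiv : ∀ x, HasFDerivAt F
      ((Ht (u x)) • fderiv ℝ (gradient u) x
        + ((ht (u x)) • fderiv ℝ u x).smulRight (gradient u x)) x := by
    intro x
    exact ((hHd (u x)).comp_hasFDerivAt x (hud x).hasFDerivAt).smul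
      ((hgradc.differentiable one_ne_zero) x).hasFDerivAt
  have hdivF : ∀ x, (∑ i, fderiv ℝ F x (EuclideanSpace.single i 1) i)
      = ht (u x) * ‖gradient u x‖^2 + Ht (u x) * laplacian' u x := by
    intro x
    rw [(hFderiv x).fderiv]
    have hsum : ∀ i : Fin (m+1),
        ((Ht (u x)) • fderiv ℝ (gradient u) x
          + ((ht (u x)) • fderiv ℝ u x).smulRight (gradient u x)) (EuclideanSpace.single i 1) i
        = Ht (u x) * (fderiv ℝ (gradient u) x (EuclideanSpace.single i 1) i)
          + ht (u x) * ((gradient u x) i * (gradient u x) i) := by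
      intro i
      rw [ContinuousLinearMap.add_apply, ContinuousLinearMap.smulRight_apply]
      rw [ContinuousLinearMap.smul_apply, ContinuousLinearMap.smul_apply]
      rw [PiLp.add_apply, PiLp.smul_apply, PiLp.smul_apply]
      rw [hfderivu]
      have hinner : ⟪gradient u x, EuclideanSpace.single i 1⟫ = (gradient u x) i := by
        rw [EuclideanSpace.inner_single_right]; simp
      rw [hinner]
      simp only [smul_eq_mul]
      ring
    rw [Finset.sum_congr rfl (fun i _ => hsum i)]
    rw [Finset.sum_add_distrib, ← Finset.mul_sum, ← Finset.mul_sum]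
    have hnorm : (∑ i, (gradient u x) i * (gradient u x) i) = ‖gradient u x‖^2 := by
      rw [← real_inner_self_eq_norm_sq]
      rw [PiLp.inner_apply]
      simp [RCLike.inner_apply, sq]
    rw [hnorm]
    rw [laplacian']
    ring
  -- apply the engine
  have hdiv0 := engine Ω hΩopen hΩbdd Φ hΦ hΩdef hfront hΦgrad F hF
    (fun x hx => by
      show ⟪Ht (u x) • gradient u x, gradient Φ x⟫ = (0:ℝ)
      rw [real_inner_smul_left, hNeumann x hx, mul_zero])
  -- split into the two pieces
  set p1 : EuclideanSpace ℝ (Fin (m+1)) → ℝ := fun x => ht (u x) * ‖gradient u x‖^2 with hp1def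
  set p2 : EuclideanSpace ℝ (Fin (m+1)) → ℝ := fun x => Ht (u x) * laplacian' u x with hp2def
  have hlapc : Continuous (laplacian' u) := by
    have h1 : Continuous (fderiv ℝ (gradient u)) := (contDiff_one_iff_fderiv.1 hgradc).2
    apply continuous_finset_sum
    intro i _
    exact (PiLp.continuous_apply (p := 2) (β := fun _ => ℝ) i).comp (h1.clm_apply continuous_const)
  have hp1c : Continuous p1 := (hhtc.comp huc).mul ((hgradc.continuous.norm).pow 2)
  have hp2c : Continuous p2 := ((hHt1.continuous).comp huc).mul hlapc
  have hp1i : IntegrableOn p1 Ω :=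
    (hp1c.locallyIntegrable.integrableOn_isCompact hK).mono_set subset_closure
  have hp2i : IntegrableOn p2 Ω :=
    (hp2c.locallyIntegrable.integrableOn_isCompact hK).mono_set subset_closure
  have hsum0 : (∫ x in Ω, p1 x) + (∫ x in Ω, p2 x) = 0 := by
    rw [← integral_add hp1i hp2i]
    rw [show (fun x => p1 x + p2 x)
        = fun x => ∑ i, fderiv ℝ F x (EuclideanSpace.single i 1) i from
      funext fun x => by rw [hdivF x]]
    exact hdiv0
  -- rewrite LHS and RHS of the goal
  have hLHS : (∫ x in Ω, ‖gradient u x‖ ^ 2 * h (u x)) = ∫ x in Ω, p1 x := by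
    apply setIntegral_congr_fun hΩopen.measurableSet
    intro x hx
    have := hht_eq (u x) (huK x (subset_closure hx))
    show ‖gradient u x‖ ^ 2 * h (u x) = ht (u x) * ‖gradient u x‖^2
    rw [this]; ring
  have hRHS : (∫ x in Ω, |laplacian' u x| * |(∫ s in (0:ℝ)..(u x), h s) / h (u x)| * h (u x))
      = ∫ x in Ω, |p2 x| := by
    apply setIntegral_congr_fun hΩopen.measurableSet
    intro x hx
    have hxK := subset_closure hx
    have hupos := (hrange x hxK).1
    have huB := (hrange x hxK).2
    have hhpos : 0 < h (u x) := hpos _ hupos huB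
    show |laplacian' u x| * |(∫ s in (0:ℝ)..(u x), h s) / h (u x)| * h (u x)
      = |Ht (u x) * laplacian' u x|
    rw [← hH_eq x hxK]
    rw [abs_div, abs_of_pos hhpos, abs_mul]
    field_simp
  rw [hLHS, hRHS]
  have h1 : (∫ x in Ω, p1 x) = - ∫ x in Ω, p2 x := by linarith
  have h2 : (- ∫ x in Ω, p2 x) ≤ |∫ x in Ω, p2 x| := neg_le_abs _
  have h3 : |∫ x in Ω, p2 x| ≤ ∫ x in Ω, |p2 x| := abs_int_le _ _
  linarith
end
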